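/- For every fixed k ∈ ℕ₀ there exist constants c, C > 0 such that for all n ∈ ℕ₀: a_n(s_k) = 0 whenever n−k is even, and c·(n+1)^{−3/4 − k/2} ≤ |a_n(s_k)| ≤ C·(n+1)^{−3/4 − k/2} whenever n−k is odd. -/

import Mathlib

open MeasureTheory ProbabilityTheory Filter Set

noncomputable section

/-- The standard Gaussian measure `N(0,1)` on `ℝ`. -/
def stdGaussian : Measure ℝ := gaussianReal 0 1

/-- The `n`-th normalized probabilists' Hermite polynomial as a function `ℝ → ℝ`. -/
def hermiteFun (n : ℕ) (x : ℝ) : ℝ :=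
  (Polynomial.aeval x (Polynomial.hermite n)) / Real.sqrt (n.factorial)

/-- The `n`-th Hermite coefficient `a_n(f) = ∫ f · h_n dγ`. -/
def hermiteCoeff (f : ℝ → ℝ) (n : ℕ) : ℝ :=
  ∫ x, f x * hermiteFun n x ∂stdGaussian

/-- The reference activation `s_k(x) = sgn(x) x^k / (2 k!)`. -/
def refAct (k : ℕ) (x : ℝ) : ℝ := Real.sign x * x ^ k / (2 * k.factorial)

/-!
Writing `γ` as `(2π)^{-1/2} e^{-x²/2} dx`, `a_n(s_k)` is a multiple of
`∫ sgn x · x^k He_n(x) e^{-x²/2} dx`. As `He_n(-x) = (-1)^n He_n(x)`, the integrand has parity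
`(-1)^(n+k+1)`: the integral vanishes for `n - k` even and is otherwise `2 J(k, n)`, where
`J(r, n) = ∫_0^∞ x^r He_n(x) e^{-x²/2} dx`. Since `(He_n e^{-x²/2})' = -He_{n+1} e^{-x²/2}`,
integration by parts gives `J(r + 1, n + 1) = (r + 1) J(r, n)` and `J(0, n + 1) = He_n(0)`.
So `J(k, n) > 0` for the finitely many `n ≤ k`, while for `n = 2i + k + 1` one gets
`|a_n| = (2i - 1)‼ / √(2π n!)`. Finally `(2i - 1)‼² = w_i (2i)!` with
`1 / (4i + 1) ≤ w_i² ≤ 1 / (2i + 1)`, and `n! / (2i)!` is a product of `k + 1` factors between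
`2i + 1` and `n + 1`, so `|a_n|⁴` is comparable to `(n + 1)^-(2k+3)`.
-/

open Polynomial Real Topology
open scoped Nat

theorem exists_pos_mul_le_and_le_mul_of_forall_ge {P : ℕ → Prop} {f g : ℕ → ℝ} (m : ℕ)
    (hg : ∀ n, 0 < g n) (hsmall : ∀ n < m, P n → 0 < f n) {c₀ C₀ : ℝ} (hc₀ : 0 < c₀)
    (hC₀ : 0 < C₀) (hlarge : ∀ n, m ≤ n → P n → c₀ * g n ≤ f n ∧ f n ≤ C₀ * g n) :
    ∃ c C : ℝ, 0 < c ∧ 0 < C ∧ ∀ n, P n → c * g n ≤ f n ∧ f n ≤ C * g n := by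
  classical
  set ratios := ((Finset.range m).filter P).image fun n => f n / g n
  have hratios : ∀ y ∈ ratios, 0 < y := by
    simp only [ratios, Finset.mem_image, Finset.mem_filter, Finset.mem_range]
    rintro _ ⟨n, ⟨hn, hP⟩, rfl⟩
    exact div_pos (hsmall n hn hP) (hg n)
  refine ⟨(insert c₀ ratios).min' (Finset.insert_nonempty _ _),
    (insert C₀ ratios).max' (Finset.insert_nonempty _ _), ?_, ?_, fun n hP => ?_⟩
  · exact (Finset.lt_min'_iff _ _).2 (by simpa [hc₀] using hratios)
  · exact hC₀.trans_le (Finset.le_max' _ _ (Finset.mem_insert_self _ _))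
  rcases lt_or_ge n m with hn | hn
  · have hmem : f n / g n ∈ ratios := Finset.mem_image_of_mem _ (by simp [hn, hP])
    constructor
    · rw [← le_div_iff₀ (hg n)]
      exact Finset.min'_le _ _ (Finset.mem_insert_of_mem hmem)
    · rw [← div_le_iff₀ (hg n)]
      exact Finset.le_max' _ _ (Finset.mem_insert_of_mem hmem)
  · obtain ⟨hlow, hup⟩ := hlarge n hn hP
    constructor
    · refine le_trans (mul_le_mul_of_nonneg_right ?_ (hg n).le) hlow
      exact Finset.min'_le _ _ (Finset.mem_insert_self _ _)
    · refine hup.trans (mul_le_mul_of_nonneg_right ?_ (hg n).le)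
      exact Finset.le_max' _ _ (Finset.mem_insert_self _ _)

lemma Real.measurable_sign : Measurable Real.sign := by
  unfold Real.sign
  exact Measurable.ite (measurableSet_lt measurable_id measurable_const) measurable_const
    (Measurable.ite (measurableSet_lt measurable_const measurable_id) measurable_const
      measurable_const)

lemma integral_eq_one_add_mul_setIntegral_Ioi {g : ℝ → ℝ} {ε : ℝ} (hg : Integrable g)
    (hneg : ∀ x, g (-x) = ε * g x) : ∫ x, g x = (1 + ε) * ∫ x in Ioi 0, g x := by
  have hIic : ∫ x in Iic 0, g x = ε * ∫ x in Ioi 0, g x := by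
    rw [← neg_zero, ← integral_comp_neg_Ioi, ← integral_const_mul]
    simp only [hneg, neg_zero]
  rw [← intervalIntegral.integral_Iic_add_Ioi hg.integrableOn hg.integrableOn, hIic]
  ring

lemma integral_stdGaussian (f : ℝ → ℝ) :
    ∫ x, f x ∂stdGaussian = (√(2 * π))⁻¹ * ∫ x, f x * exp (-(x ^ 2 / 2)) := by
  rw [_root_.stdGaussian, integral_gaussianReal_eq_integral_smul one_ne_zero,
    ← integral_const_mul]
  congr 1 with x
  simp only [gaussianPDFReal, NNReal.coe_one, sub_zero, mul_one, neg_div, smul_eq_mul]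
  ring

lemma integrable_pow_mul_exp_neg_sq_div_two (r : ℕ) :
    Integrable (fun x : ℝ => x ^ r * exp (-(x ^ 2 / 2))) := by
  have h := integrable_rpow_mul_exp_neg_mul_sq (b := 1 / 2) (by norm_num)
    (s := r) (neg_one_lt_zero.trans_le r.cast_nonneg)
  simp only [rpow_natCast] at h
  convert h using 4 with x
  ring

lemma tendsto_pow_mul_exp_neg_sq_div_two_atTop (r : ℕ) :
    Tendsto (fun x : ℝ => x ^ r * exp (-(x ^ 2 / 2))) atTop (𝓝 0) := by
  have h := (rpow_mul_exp_neg_mul_sq_isLittleO_exp_neg (b := 1 / 2) (by norm_num) r).trans_tendsto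
    (tendsto_exp_atBot.comp (tendsto_id.const_mul_atTop_of_neg (by norm_num)))
  simp only [rpow_natCast] at h
  convert h using 4 with x
  ring

lemma integrable_eval_mul_exp_neg_sq_div_two (p : ℝ[X]) :
    Integrable (fun x : ℝ => p.eval x * exp (-(x ^ 2 / 2))) := by
  induction p using Polynomial.induction_on' with
  | add p q hp hq => simpa only [eval_add, add_mul, Pi.add_def] using hp.add hq
  | monomial r a =>
    simpa only [eval_monomial, mul_assoc] using
      (integrable_pow_mul_exp_neg_sq_div_two r).const_mul a

lemma tendsto_eval_mul_exp_neg_sq_div_two_atTop (p : ℝ[X]) :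
    Tendsto (fun x : ℝ => p.eval x * exp (-(x ^ 2 / 2))) atTop (𝓝 0) := by
  induction p using Polynomial.induction_on' with
  | add p q hp hq => simpa only [eval_add, add_mul, add_zero] using hp.add hq
  | monomial r a =>
    simpa only [eval_monomial, mul_assoc, mul_zero] using
      (tendsto_pow_mul_exp_neg_sq_div_two_atTop r).const_mul a

theorem Polynomial.aeval_hermite_neg {R : Type*} [CommRing R] (n : ℕ) (x : R) :
    aeval (-x) (hermite n) = (-1) ^ n * aeval x (hermite n) := by
  simp only [aeval_eq_sum_range, natDegree_hermite, Finset.mul_sum]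
  refine Finset.sum_congr rfl fun i _ => ?_
  rcases Nat.even_or_odd (n + i) with h | h
  · have hni : n % 2 = i % 2 := by rw [Nat.even_iff] at h; omega
    rw [neg_pow, neg_one_pow_eq_pow_mod_two, ← hni, ← neg_one_pow_eq_pow_mod_two, mul_smul_comm]
  · simp [coeff_hermite_of_odd_add h]

lemma Polynomial.aeval_zero_hermite_two_mul (i : ℕ) :
    aeval (0 : ℝ) (hermite (2 * i)) = (-1) ^ i * (2 * i - 1)‼ := by
  simpa [aeval_def, eval₂_at_zero] using
    congrArg (Int.cast : ℤ → ℝ) (coeff_hermite_explicit i 0)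

def hermiteGauss (n : ℕ) (x : ℝ) : ℝ := aeval x (hermite n) * exp (-(x ^ 2 / 2))

lemma hasDerivAt_hermiteGauss (n : ℕ) (x : ℝ) :
    HasDerivAt (hermiteGauss n) (-hermiteGauss (n + 1) x) x := by
  have hexp : HasDerivAt (fun y : ℝ => exp (-(y ^ 2 / 2))) (-x * exp (-(x ^ 2 / 2))) x := by
    have h : HasDerivAt (fun y : ℝ => -(y ^ 2 / 2)) (-x) x := by
      simpa using ((hasDerivAt_pow 2 x).div_const 2).fun_neg
    simpa only [mul_comm] using h.exp
  refine (((hermite n).hasDerivAt_aeval (𝕜 := ℝ) x).mul hexp).congr_deriv ?_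
  simp only [hermiteGauss, hermite_succ, map_sub, map_mul, aeval_X]
  ring

lemma hermiteGauss_neg (n : ℕ) (x : ℝ) :
    hermiteGauss n (-x) = (-1) ^ n * hermiteGauss n x := by
  simp only [hermiteGauss, aeval_hermite_neg, neg_sq, mul_assoc]

lemma pow_mul_hermiteGauss_eq_eval_mul (r n : ℕ) (x : ℝ) :
    x ^ r * hermiteGauss n x =
      (X ^ r * (hermite n).map (Int.castRingHom ℝ)).eval x * exp (-(x ^ 2 / 2)) := by
  simp [hermiteGauss, aeval_def, eval_map, mul_assoc]

lemma integrable_pow_mul_hermiteGauss (r n : ℕ) :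
    Integrable (fun x => x ^ r * hermiteGauss n x) := by
  simpa only [pow_mul_hermiteGauss_eq_eval_mul] using integrable_eval_mul_exp_neg_sq_div_two _

lemma tendsto_pow_mul_hermiteGauss_atTop (r n : ℕ) :
    Tendsto (fun x => x ^ r * hermiteGauss n x) atTop (𝓝 0) := by
  simpa only [pow_mul_hermiteGauss_eq_eval_mul] using
    tendsto_eval_mul_exp_neg_sq_div_two_atTop _

def hermiteHalfMoment (r n : ℕ) : ℝ := ∫ x in Ioi 0, x ^ r * hermiteGauss n x

lemma hermiteHalfMoment_zero_succ (n : ℕ) :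
    hermiteHalfMoment 0 (n + 1) = aeval 0 (hermite n) := by
  have h := integral_Ioi_of_hasDerivAt_of_tendsto' (a := 0)
    (fun x _ => (hasDerivAt_hermiteGauss n x).neg)
    (by simpa using (integrable_pow_mul_hermiteGauss 0 (n + 1)).neg.integrableOn)
    (by simpa [Pi.neg_def] using (tendsto_pow_mul_hermiteGauss_atTop 0 n).neg)
  simpa [hermiteHalfMoment, hermiteGauss, integral_neg] using h

lemma hermiteHalfMoment_succ_succ (r n : ℕ) :
    hermiteHalfMoment (r + 1) (n + 1) = (r + 1) * hermiteHalfMoment r n := by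
  have hint₁ := (integrable_pow_mul_hermiteGauss r n).const_mul (r + 1 : ℝ)
  have hint₂ := integrable_pow_mul_hermiteGauss (r + 1) (n + 1)
  have h := integral_Ioi_of_hasDerivAt_of_tendsto' (a := 0)
    (fun x _ => ((hasDerivAt_pow (r + 1) x).mul (hasDerivAt_hermiteGauss n x)).congr_deriv
      (by push_cast; ring : _ = (r + 1 : ℝ) * (x ^ r * hermiteGauss n x) -
        x ^ (r + 1) * hermiteGauss (n + 1) x))
    (hint₁.sub hint₂).integrableOn (tendsto_pow_mul_hermiteGauss_atTop (r + 1) n)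
  rw [integral_sub hint₁.integrableOn hint₂.integrableOn, integral_const_mul] at h
  simp only [Pi.mul_apply, ne_eq, Nat.add_one_ne_zero, not_false_eq_true, zero_pow, zero_mul,
    sub_zero] at h
  rw [hermiteHalfMoment, hermiteHalfMoment]
  linarith

lemma hermiteHalfMoment_zero_pos (r : ℕ) : 0 < hermiteHalfMoment r 0 := by
  have h := integral_comp_abs (f := fun x => x ^ r * hermiteGauss 0 x)
  have hpos : 0 < ∫ x, |x| ^ r * hermiteGauss 0 |x| := by
    refine integral_pos_of_integrable_nonneg_nonzero (x := 1)
      (by unfold hermiteGauss; fun_prop) ?_ (fun x => ?_) (by simp [hermiteGauss])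
    · simpa [hermiteGauss, abs_mul, abs_pow] using (integrable_pow_mul_hermiteGauss r 0).abs
    · simp only [Pi.zero_apply, hermiteGauss, hermite_zero, map_one, one_mul]
      positivity
  rw [hermiteHalfMoment]
  linarith

lemma hermiteHalfMoment_add_succ (n k : ℕ) :
    hermiteHalfMoment k (n + k + 1) = k ! * aeval 0 (hermite n) := by
  induction k with
  | zero => simp [hermiteHalfMoment_zero_succ]
  | succ k ih =>
    rw [← add_assoc, hermiteHalfMoment_succ_succ, ih, Nat.factorial_succ]
    push_cast
    ring

lemma hermiteHalfMoment_add_self_pos (r n : ℕ) : 0 < hermiteHalfMoment (r + n) n := by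
  induction n with
  | zero => exact hermiteHalfMoment_zero_pos r
  | succ n ih =>
    rw [← add_assoc, hermiteHalfMoment_succ_succ]
    positivity

lemma hermiteCoeff_refAct_eq (k n : ℕ) :
    hermiteCoeff (refAct k) n =
      (1 - (-1) ^ (n + k)) * hermiteHalfMoment k n / (2 * k ! * √(n ! : ℝ) * √(2 * π)) := by
  set g : ℝ → ℝ := fun x => Real.sign x * (x ^ k * hermiteGauss n x)
  have hg : Integrable g := by
    refine (integrable_pow_mul_hermiteGauss k n).bdd_mul (c := 1)
      Real.measurable_sign.aestronglyMeasurable (ae_of_all _ fun x => ?_)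
    rcases Real.sign_apply_eq x with h | h | h <;> simp [h]
  have hneg : ∀ x, g (-x) = -(-1) ^ (n + k) * g x := by
    intro x
    simp only [g, Real.sign_neg, hermiteGauss_neg, neg_pow x, pow_add]
    ring
  have hIoi : ∫ x in Ioi 0, g x = hermiteHalfMoment k n :=
    setIntegral_congr_fun measurableSet_Ioi fun x hx => by simp [g, Real.sign_of_pos hx]
  have hcoeff : hermiteCoeff (refAct k) n =
      (2 * k ! * √(n ! : ℝ) * √(2 * π))⁻¹ * ∫ x, g x := by
    rw [hermiteCoeff, integral_stdGaussian, ← integral_const_mul, ← integral_const_mul]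
    congr 1 with x
    simp only [g, refAct, hermiteFun, hermiteGauss]
    field_simp
  rw [hcoeff, integral_eq_one_add_mul_setIntegral_Ioi hg hneg, hIoi]
  field_simp
  ring

lemma hermiteCoeff_refAct_of_even {k n : ℕ} (h : Even (n + k)) :
    hermiteCoeff (refAct k) n = 0 := by
  simp [hermiteCoeff_refAct_eq, h.neg_one_pow]

lemma hermiteCoeff_refAct_of_odd {k n : ℕ} (h : Odd (n + k)) :
    hermiteCoeff (refAct k) n = hermiteHalfMoment k n / (k ! * √(n ! : ℝ) * √(2 * π)) := by
  rw [hermiteCoeff_refAct_eq, h.neg_one_pow]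
  field_simp
  ring

lemma hermiteCoeff_refAct_pos {k n : ℕ} (hnk : n ≤ k) (h : Odd (n + k)) :
    0 < hermiteCoeff (refAct k) n := by
  obtain ⟨r, rfl⟩ := Nat.exists_eq_add_of_le' hnk
  have := hermiteHalfMoment_add_self_pos r n
  rw [hermiteCoeff_refAct_of_odd h]
  positivity

/-- This is `(2i choose i) / 4^i`; at `i = 0` the truncated `2 * i - 1` gives `0‼ = 1`. -/
def wallisRatio (i : ℕ) : ℝ := ((2 * i - 1)‼ : ℝ) ^ 2 / (2 * i)!

lemma wallisRatio_succ (i : ℕ) :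
    wallisRatio (i + 1) = wallisRatio i * ((2 * i + 1) / (2 * i + 2)) := by
  have hdf : (2 * (i + 1) - 1)‼ = (2 * i + 1) * (2 * i - 1)‼ := by
    rw [show 2 * (i + 1) - 1 = 2 * i + 1 by omega, Nat.doubleFactorial_add_one]
  rw [wallisRatio, wallisRatio, hdf, show 2 * (i + 1) = 2 * i + 1 + 1 by ring,
    Nat.factorial_succ, Nat.factorial_succ]
  push_cast
  field_simp
  ring

lemma one_le_mul_wallisRatio_sq (i : ℕ) : 1 ≤ (4 * i + 1) * wallisRatio i ^ 2 := by
  induction i with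
  | zero => simp [wallisRatio]
  | succ i ih =>
    rw [wallisRatio_succ, mul_pow, div_pow, mul_div_assoc', mul_div_assoc',
      le_div_iff₀ (by positivity)]
    push_cast
    nlinarith [sq_nonneg (wallisRatio i)]

lemma mul_wallisRatio_sq_le_one (i : ℕ) : (2 * i + 1) * wallisRatio i ^ 2 ≤ 1 := by
  induction i with
  | zero => simp [wallisRatio]
  | succ i ih =>
    rw [wallisRatio_succ, mul_pow, div_pow, mul_div_assoc', mul_div_assoc',
      div_le_one (by positivity)]
    push_cast
    nlinarith [sq_nonneg (wallisRatio i)]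

lemma hermiteCoeff_refAct_pow_four (k i : ℕ) :
    hermiteCoeff (refAct k) (2 * i + k + 1) ^ 4 =
      wallisRatio i ^ 2 / ((2 * i + 1).ascFactorial (k + 1) ^ 2 * (2 * π) ^ 2) := by
  have hodd : Odd (2 * i + k + 1 + k) := ⟨i + k, by ring⟩
  have hsqrt : ∀ x : ℝ, 0 ≤ x → √x ^ 4 = x ^ 2 := fun x hx => by
    rw [show 4 = 2 * 2 from rfl, pow_mul, Real.sq_sqrt hx]
  rw [hermiteCoeff_refAct_of_odd hodd, hermiteHalfMoment_add_succ, aeval_zero_hermite_two_mul,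
    add_assoc (2 * i), ← Nat.factorial_mul_ascFactorial, wallisRatio]
  push_cast
  rw [Real.sqrt_mul (by positivity)]
  field_simp
  rw [← pow_mul, Even.neg_one_pow ⟨2 * i, by ring⟩, hsqrt _ (by positivity),
    hsqrt _ (by positivity), hsqrt _ (by positivity)]
  ring

lemma le_hermiteCoeff_refAct_pow_four (k i : ℕ) :
    (1 / 4) ^ 4 * ((2 * i + k + 2 : ℝ) ^ (2 * k + 3))⁻¹ ≤
      hermiteCoeff (refAct k) (2 * i + k + 1) ^ 4 := by
  have hA : ((2 * i + 1).ascFactorial (k + 1) : ℝ) ≤ (2 * i + k + 2 : ℝ) ^ (k + 1) :=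
    calc ((2 * i + 1).ascFactorial (k + 1) : ℝ) ≤ (2 * i + (k + 1) : ℝ) ^ (k + 1) := by
          exact_mod_cast Nat.ascFactorial_le_pow_add (2 * i) (k + 1)
      _ ≤ _ := pow_le_pow_left₀ (by positivity) (by linarith) _
  have hW : (4 * (2 * i + k + 2 : ℝ))⁻¹ ≤ wallisRatio i ^ 2 := by
    rw [inv_le_iff_one_le_mul₀' (by positivity)]
    refine (one_le_mul_wallisRatio_sq i).trans (mul_le_mul_of_nonneg_right ?_ (sq_nonneg _))
    linarith [k.cast_nonneg (α := ℝ)]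
  rw [hermiteCoeff_refAct_pow_four]
  calc (1 / 4) ^ 4 * ((2 * i + k + 2 : ℝ) ^ (2 * k + 3))⁻¹
      = (4 * (2 * i + k + 2 : ℝ))⁻¹ / (((2 * i + k + 2 : ℝ) ^ (k + 1)) ^ 2 * (2 * 4) ^ 2) := by
        field_simp
        ring
    _ ≤ _ := by gcongr; exact pi_le_four

lemma hermiteCoeff_refAct_pow_four_le (k i : ℕ) :
    hermiteCoeff (refAct k) (2 * i + k + 1) ^ 4 ≤
      ((k + 2) ^ (k + 1)) ^ 4 * ((2 * i + k + 2 : ℝ) ^ (2 * k + 3))⁻¹ := by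
  have hA : (2 * i + 1 : ℝ) ^ (k + 1) ≤ ((2 * i + 1).ascFactorial (k + 1) : ℝ) := by
    exact_mod_cast Nat.pow_succ_le_ascFactorial (2 * i + 1) (k + 1)
  have hW : wallisRatio i ^ 2 ≤ (2 * i + 1 : ℝ)⁻¹ := by
    rw [← one_div, le_div_iff₀ (by positivity), mul_comm]
    exact mul_wallisRatio_sq_le_one i
  have hN : (2 * i + 1 : ℝ)⁻¹ ≤ (k + 2) * (2 * i + k + 2 : ℝ)⁻¹ := by
    rw [← div_eq_mul_inv, le_div_iff₀ (by positivity), inv_mul_eq_div,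
      div_le_iff₀ (by positivity)]
    nlinarith
  rw [hermiteCoeff_refAct_pow_four]
  calc wallisRatio i ^ 2 / ((2 * i + 1).ascFactorial (k + 1) ^ 2 * (2 * π) ^ 2)
      ≤ (2 * i + 1 : ℝ)⁻¹ / (((2 * i + 1 : ℝ) ^ (k + 1)) ^ 2 * 1 ^ 2) := by
        gcongr
        linarith [pi_gt_three]
    _ = ((2 * i + 1 : ℝ) ^ (2 * k + 3))⁻¹ := by
        field_simp
        ring
    _ ≤ (k + 2) ^ (2 * k + 3) * ((2 * i + k + 2 : ℝ) ^ (2 * k + 3))⁻¹ := by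
        rw [← inv_pow, ← inv_pow, ← mul_pow]
        exact pow_le_pow_left₀ (by positivity) hN _
    _ ≤ ((k + 2) ^ (k + 1)) ^ 4 * ((2 * i + k + 2 : ℝ) ^ (2 * k + 3))⁻¹ := by
        gcongr
        rw [← pow_mul]
        exact pow_le_pow_right₀ (by linarith) (by omega)

lemma rpow_neg_three_div_four_sub_half_pow_four {N : ℝ} (hN : 0 < N) (k : ℕ) :
    (N ^ (-(3 : ℝ) / 4 - (k : ℝ) / 2)) ^ 4 = (N ^ (2 * k + 3))⁻¹ := by
  rw [← rpow_mul_natCast hN.le, ← rpow_natCast, ← rpow_neg hN.le]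
  congr 1
  push_cast
  ring

lemma abs_hermiteCoeff_refAct_bounds (k i : ℕ) :
    1 / 4 * (((2 * i + k + 1 : ℕ) : ℝ) + 1) ^ (-(3 : ℝ) / 4 - (k : ℝ) / 2) ≤
        |hermiteCoeff (refAct k) (2 * i + k + 1)| ∧
      |hermiteCoeff (refAct k) (2 * i + k + 1)| ≤
        (k + 2) ^ (k + 1) * (((2 * i + k + 1 : ℕ) : ℝ) + 1) ^ (-(3 : ℝ) / 4 - (k : ℝ) / 2) := by
  have hN : ((2 * i + k + 1 : ℕ) : ℝ) + 1 = 2 * i + k + 2 := by push_cast; ring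
  have hpow := rpow_neg_three_div_four_sub_half_pow_four (N := 2 * i + k + 2) (by positivity) k
  rw [hN]
  constructor
  · rw [← pow_le_pow_iff_left₀ (by positivity) (abs_nonneg _) four_ne_zero, mul_pow, hpow,
      Even.pow_abs ⟨2, rfl⟩]
    exact le_hermiteCoeff_refAct_pow_four k i
  · rw [← pow_le_pow_iff_left₀ (abs_nonneg _) (by positivity) four_ne_zero, mul_pow, hpow,
      Even.pow_abs ⟨2, rfl⟩]
    exact hermiteCoeff_refAct_pow_four_le k i

/-- for fixed `k`, `a_n(s_k) = 0` for `n−k` even, and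
`|a_n(s_k)| = Θ((n+1)^{−3/4−k/2})` over `n` with `n−k` odd. -/
theorem refAct_hermiteCoeff_decay (k : ℕ) :
    ∃ c C : ℝ, 0 < c ∧ 0 < C ∧ ∀ n : ℕ,
      (Even ((n : ℤ) - k) → hermiteCoeff (refAct k) n = 0) ∧
      (Odd ((n : ℤ) - k) →
        c * ((n : ℝ) + 1) ^ (-(3 : ℝ) / 4 - (k : ℝ) / 2) ≤ |hermiteCoeff (refAct k) n| ∧
        |hermiteCoeff (refAct k) n| ≤ C * ((n : ℝ) + 1) ^ (-(3 : ℝ) / 4 - (k : ℝ) / 2)) := by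
  have hodd : ∀ n : ℕ, Odd ((n : ℤ) - k) → Odd (n + k) := fun n h => by
    rw [Int.odd_iff] at h; rw [Nat.odd_iff]; omega
  obtain ⟨c, C, hc, hC, hbounds⟩ := exists_pos_mul_le_and_le_mul_of_forall_ge
    (P := fun n : ℕ => Odd ((n : ℤ) - k)) (f := fun n => |hermiteCoeff (refAct k) n|)
    (g := fun n : ℕ => ((n : ℝ) + 1) ^ (-(3 : ℝ) / 4 - (k : ℝ) / 2)) (k + 1)
    (fun n => by positivity)
    (fun n hn h => abs_pos.2 (hermiteCoeff_refAct_pos (by omega) (hodd n h)).ne')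
    (by norm_num : (0 : ℝ) < 1 / 4) (by positivity : (0 : ℝ) < (k + 2) ^ (k + 1))
    (fun n hn h => by
      obtain ⟨i, rfl⟩ : ∃ i, n = 2 * i + k + 1 := by
        have := Nat.odd_iff.1 (hodd n h)
        exact ⟨(n - k - 1) / 2, by omega⟩
      exact abs_hermiteCoeff_refAct_bounds k i)
  refine ⟨c, C, hc, hC, fun n => ⟨fun h => hermiteCoeff_refAct_of_even ?_, hbounds n⟩⟩
  rw [Int.even_iff] at h
  rw [Nat.even_iff]
  omega

end
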